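/- arXiv:math/9803167 — 7 statements merged into one kernel-verified Lean document; each statement's English description precedes it below -/
import Mathlib

section
/- Let λ be an infinite cardinal. If Jensen's principle □_λ holds, then λ⁺ ∈ I[λ⁺] (i.e., the set of all ordinals below λ⁺ belongs to I[λ⁺]). -/
set_option autoImplicit false
open Cardinal

universe u

open Cardinal Set

/-- The order type of a set of ordinals. -/
noncomputable def otp (s : Set Ordinal.{u}) : Ordinal.{u + 1} :=
  Ordinal.type ((· < ·) : s → s → Prop)

/-- `C` is a closed subset of the ordinal `δ`: `C ⊆ δ` and `C` contains the supremum of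
each of its nonempty subsets whose supremum is below `δ`. -/
def IsClosedIn (C : Set Ordinal.{u}) (δ : Ordinal.{u}) : Prop :=
  C ⊆ Set.Iio δ ∧ ∀ s ⊆ C, s.Nonempty → sSup s < δ → sSup s ∈ C

/-- `C` is a club (closed unbounded) subset of the ordinal `δ`. -/
def IsClubIn (C : Set Ordinal.{u}) (δ : Ordinal.{u}) : Prop :=
  IsClosedIn C δ ∧ ∀ α < δ, ∃ β ∈ C, α < β

/-- The nonaccumulation points of a set of ordinals `C`. -/
def nacc (C : Set Ordinal.{u}) : Set Ordinal.{u} :=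
  {α ∈ C | sSup (C ∩ Set.Iio α) < α}

/-- `A` belongs to the ideal `I[κ]`: `A ⊆ κ`, the set of regular ordinals in `A` is not
stationary in `κ`, and there is a sequence `⟨P_α : α < κ⟩`, with each `P_α` a family of
fewer than `κ` subsets of `α`, such that every limit `α ∈ A` with `cf α < α` carries a
cofinal subset `x ⊆ α` of order type `< α` all of whose initial segments appear in
`⋃_{γ < α} P_γ`. -/
def MemIdealI (κ : Cardinal.{u}) (A : Set Ordinal.{u}) : Prop :=
  A ⊆ Set.Iio κ.ord ∧
  (∃ E : Set Ordinal.{u}, IsClubIn E κ.ord ∧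
    ∀ δ ∈ A, δ ∈ E → δ.cof.ord ≠ δ) ∧
  ∃ P : Ordinal.{u} → Set (Set Ordinal.{u}),
    (∀ α < κ.ord, (∀ x ∈ P α, x ⊆ Set.Iio α) ∧ Cardinal.mk (P α) < Cardinal.lift.{u+1} κ) ∧
    ∀ α ∈ A, Order.IsSuccLimit α → α.cof.ord < α →
      ∃ x : Set Ordinal.{u}, x ⊆ Set.Iio α ∧ otp x < Ordinal.lift.{u+1} α ∧ sSup x = α ∧
        ∀ β < α, x ∩ Set.Iio β ∈ ⋃ γ ∈ Set.Iio α, P γ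

/-- Jensen's principle `□_l` for an infinite cardinal `l`: there is a sequence assigning
to each limit ordinal `α < l⁺` a club `C_α ⊆ α` of order type `≤ l` which is coherent at
limit points. -/
def SquarePrinciple (l : Cardinal.{u}) : Prop :=
  ∃ C : Ordinal.{u} → Set Ordinal.{u},
    ∀ α : Ordinal.{u}, Order.IsSuccLimit α → α < (Order.succ l).ord →
      IsClubIn (C α) α ∧ otp (C α) ≤ Ordinal.lift.{u+1} l.ord ∧
      ∀ β < α, (C α ∩ Set.Iio β).Nonempty → sSup (C α ∩ Set.Iio β) = β →
        C β = C α ∩ Set.Iio β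

/-!
The club of ordinals in `(l, l⁺)` contains no regular cardinal, since `cf δ ≤ |δ| ≤ l < δ` there.
For a singular limit `α < l⁺`, either the limit points of `C_α` are cofinal in `α` or they are
bounded by some `β₀ < α`. In the first case let `x` consist of the elements of `C_α` whose
position in `C_α` lies in a fixed cofinal set of positions of order type `cf (otp C_α) = cf α`.
For `β` below a limit point `δ` of `C_α`, coherence (`C_δ = C_α ∩ δ`) makes `x ∩ β` the same
construction applied to `C_δ`, so it is determined by `δ`, by `otp C_α ≤ l` and by `β`: at most
`l` possibilities for each `δ`. In the second case `C_α` has order type `ω` above `β₀`, so its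
initial segments are finite.
-/

open Ordinal Order

section OrderType

variable {s D : Set Ordinal.{u}} {d : Ordinal.{u}}

theorem otp_inter_Iio (hd : d ∈ D) :
    otp (D ∩ Iio d) = typein ((· < ·) : D → D → Prop) ⟨d, hd⟩ := by
  rw [← type_subrel]
  exact type_eq.2 ⟨⟨⟨fun x => ⟨⟨x.1, x.2.1⟩, x.2.2⟩, fun x => ⟨x.1.1, x.1.2, x.2⟩,
    fun _ => rfl, fun _ => rfl⟩, Iff.rfl⟩⟩

theorem otp_inter_Iio_lt (hd : d ∈ D) : otp (D ∩ Iio d) < otp D := by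
  rw [otp_inter_Iio hd]
  exact typein_lt_type _ _

theorem otp_inter_Iio_strictMonoOn : StrictMonoOn (fun d => otp (D ∩ Iio d)) D :=
  fun d hd d' hd' h => by
    simp only [otp_inter_Iio hd, otp_inter_Iio hd', typein_lt_typein]
    exact h

theorem exists_otp_inter_Iio_eq {ξ : Ordinal.{u+1}} (h : ξ < otp D) :
    ∃ d ∈ D, otp (D ∩ Iio d) = ξ := by
  obtain ⟨a, ha⟩ := typein_surj ((· < ·) : D → D → Prop) h
  exact ⟨a.1, a.2, (otp_inter_Iio a.2).trans ha⟩

theorem otp_le_omega0 (h : ∀ d ∈ s, (s ∩ Iio d).Finite) : otp s ≤ ω := by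
  by_contra! hω
  obtain ⟨d, hd, hdω⟩ := exists_otp_inter_Iio_eq hω
  have := (h d hd).fintype
  have : otp (s ∩ Iio d) < ω := by
    rw [otp, type_fintype]
    exact natCast_lt_omega0 _
  exact this.ne hdω

theorem cof_otp_eq {α : Ordinal.{u}} (hsub : D ⊆ Iio α) (hcofinal : ∀ β < α, ∃ d ∈ D, β < d) :
    (otp D).cof = Cardinal.lift.{u+1} α.cof := by
  rw [lift_cof, ← cof_Iio, otp, cof_type]
  refine cof_congr_of_strictMono (f := fun d : D => (⟨d.1, hsub d.2⟩ : Iio α))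
    (fun _ _ h => h) fun β => ?_
  obtain ⟨d, hd, hβd⟩ := hcofinal β.1 β.2
  exact ⟨_, mem_range_self ⟨d, hd⟩, hβd.le⟩

end OrderType

section Positions

/-- A cofinal subset of `ρ` of order type `cf ρ`, depending on `ρ` alone. -/
noncomputable def cofinalPositions (ρ : Ordinal.{u}) : Set Ordinal.{u} :=
  {ξ | ∃ h : ξ < ρ, ToType.mk ⟨ξ, h⟩ ∈ (exists_ord_cof_eq ρ.ToType).choose}

theorem exists_mem_cofinalPositions_le {ρ ξ : Ordinal.{u}} (h : ξ < ρ) :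
    ∃ η ∈ cofinalPositions ρ, ξ ≤ η := by
  obtain ⟨b, hb, hξb⟩ := (exists_ord_cof_eq ρ.ToType).choose_spec.1 (ToType.mk ⟨ξ, h⟩)
  refine ⟨(ToType.mk.symm b).1, ⟨(ToType.mk.symm b).2, by simpa using hb⟩, ?_⟩
  exact ToType.mk.le_symm_apply.2 hξb

def elemsAtPositions (D : Set Ordinal.{u}) (T : Set Ordinal.{u+1}) : Set Ordinal.{u} :=
  {d ∈ D | otp (D ∩ Iio d) ∈ T}

variable {D : Set Ordinal.{u}} {T : Set Ordinal.{u+1}}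

theorem elemsAtPositions_subset : elemsAtPositions D T ⊆ D :=
  fun _ hd => hd.1

theorem inter_Iio_inter_Iio {δ d : Ordinal.{u}} (h : d ≤ δ) :
    D ∩ Iio δ ∩ Iio d = D ∩ Iio d := by
  rw [inter_assoc, Iio_inter_Iio, min_eq_right h]

theorem elemsAtPositions_inter_Iio (δ : Ordinal.{u}) :
    elemsAtPositions D T ∩ Iio δ = elemsAtPositions (D ∩ Iio δ) T := by
  ext d
  simp only [elemsAtPositions, mem_inter_iff, mem_ofPred_eq, mem_Iio]
  constructor
  · rintro ⟨⟨hd, hT⟩, hdδ⟩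
    exact ⟨⟨hd, hdδ⟩, by rwa [inter_Iio_inter_Iio hdδ.le]⟩
  · rintro ⟨⟨hd, hdδ⟩, hT⟩
    exact ⟨⟨hd, by rwa [inter_Iio_inter_Iio hdδ.le] at hT⟩, hdδ⟩

theorem exists_mem_elemsAtPositions_cofinalPositions_le {d : Ordinal.{u}} (hd : d ∈ D) :
    ∃ d' ∈ elemsAtPositions D (cofinalPositions (otp D)), d ≤ d' := by
  obtain ⟨η, ⟨hη, hηT⟩, hdη⟩ := exists_mem_cofinalPositions_le (otp_inter_Iio_lt hd)
  obtain ⟨d', hd', rfl⟩ := exists_otp_inter_Iio_eq hη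
  exact ⟨d', ⟨hd', hη, hηT⟩, (otp_inter_Iio_strictMonoOn.le_iff_le hd hd').1 hdη⟩

theorem otp_elemsAtPositions_cofinalPositions_le (ρ : Ordinal.{u+1}) :
    otp (elemsAtPositions D (cofinalPositions ρ)) ≤ ρ.cof.ord := by
  let f : elemsAtPositions D (cofinalPositions ρ) → (exists_ord_cof_eq ρ.ToType).choose :=
    fun d => ⟨_, d.2.2.choose_spec⟩
  have hf : StrictMono f := fun d d' h =>
    ToType.mk.strictMono (otp_inter_Iio_strictMonoOn d.2.1 d'.2.1 h)
  rw [← cof_toType, ← (exists_ord_cof_eq ρ.ToType).choose_spec.2]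
  exact RelEmbedding.ordinal_type_le (OrderEmbedding.ofStrictMono f hf).ltEmbedding

end Positions

section LimitPoints

def IsLimitPointOf (C : Set Ordinal.{u}) (δ : Ordinal.{u}) : Prop :=
  (C ∩ Iio δ).Nonempty ∧ sSup (C ∩ Iio δ) = δ

theorem IsLimitPointOf.mono {s C : Set Ordinal.{u}} {δ : Ordinal.{u}} (h : IsLimitPointOf s δ)
    (hsC : s ⊆ C) : IsLimitPointOf C δ := by
  have hsub : s ∩ Iio δ ⊆ C ∩ Iio δ := inter_subset_inter_left _ hsC
  refine ⟨h.1.mono hsub, le_antisymm (csSup_le (h.1.mono hsub) fun _ hy => hy.2.le) ?_⟩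
  exact h.2.symm.le.trans (csSup_le_csSup ⟨δ, fun _ hy => hy.2.le⟩ h.1 hsub)

theorem finite_inter_Iio_of_forall_not_isLimitPointOf {s : Set Ordinal.{u}} {β : Ordinal.{u}}
    (h : ∀ μ ≤ β, ¬IsLimitPointOf s μ) : (s ∩ Iio β).Finite := by
  induction β using WellFoundedLT.induction with
  | _ β ih =>
  rcases (s ∩ Iio β).eq_empty_or_nonempty with hempty | hne
  · exact hempty ▸ finite_empty
  have hbdd : BddAbove (s ∩ Iio β) := ⟨β, fun _ hy => hy.2.le⟩
  have hσ : sSup (s ∩ Iio β) < β :=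
    (csSup_le hne fun _ hy => hy.2.le).lt_of_ne fun heq => h β le_rfl ⟨hne, heq⟩
  refine ((ih _ hσ fun μ hμ => h μ (hμ.trans hσ.le)).insert (sSup (s ∩ Iio β))).subset ?_
  intro y hy
  rcases (le_csSup hbdd hy).eq_or_lt with rfl | hlt
  · exact mem_insert _ _
  · exact mem_insert_of_mem _ ⟨hy.1, hlt⟩

end LimitPoints

section Club

variable {l : Cardinal.{u}}

theorem isClubIn_Ioo {a b : Ordinal.{u}} (hb : IsSuccLimit b) (hab : a < b) :
    IsClubIn (Ioo a b) b := by
  refine ⟨⟨fun _ hy => hy.2, fun s hs hne hsup => ⟨?_, hsup⟩⟩, fun γ hγ => ?_⟩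
  · obtain ⟨y, hy⟩ := hne
    exact (hs hy).1.trans_le (le_csSup ⟨b, fun _ hz => (hs hz).2.le⟩ hy)
  · exact ⟨succ (max γ a), ⟨(le_max_right _ _).trans_lt (lt_succ _),
      hb.succ_lt (max_lt hγ hab)⟩, (le_max_left _ _).trans_lt (lt_succ _)⟩

theorem ord_cof_lt_of_mem_Ioo {δ : Ordinal.{u}} (hδ : δ ∈ Ioo l.ord (succ l).ord) :
    δ.cof.ord < δ :=
  calc δ.cof.ord ≤ l.ord := ord_le_ord.2 ((cof_le_card δ).trans (lt_succ_iff.1 (lt_ord.1 hδ.2)))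
    _ < δ := hδ.1

end Club

section Cardinality

open Cardinal

variable {l : Cardinal.{u}}

theorem mk_Iio_le {o : Ordinal.{u}} (ho : o.card ≤ l) : #(Iio o) ≤ lift.{u+1} l := by
  rw [Cardinal.mk_Iio_ordinal]
  exact lift_le.2 ho

theorem mk_Iic_le (hl : ℵ₀ ≤ l) {o : Ordinal.{u}} (ho : o.card ≤ l) :
    #(Iic o) ≤ lift.{u+1} l := by
  rw [← Iio_succ, succ_eq_add_one]
  exact mk_Iio_le (by rw [card_add_one]; exact add_le_of_le hl ho (one_le_aleph0.trans hl))

theorem mk_finset_le (hl : ℵ₀ ≤ l) {α : Type u} (hα : #α ≤ l) : #(Finset α) ≤ l :=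
  calc #(Finset α) ≤ #(List α) :=
      (by classical exact mk_le_of_surjective List.toFinset_surjective)
    _ ≤ max ℵ₀ #α := mk_list_le_max α
    _ ≤ l := max_le hl hα

def squareTraces (C : Ordinal.{u} → Set Ordinal.{u}) (l : Cardinal.{u}) (γ : Ordinal.{u}) :
    Set (Set Ordinal.{u}) :=
  range (fun t : Finset (Iio γ) => Subtype.val '' (t : Set (Iio γ))) ∪
    range (fun p : Iic l.ord × Iic γ =>
      elemsAtPositions (C γ) (cofinalPositions (Ordinal.lift.{u+1} p.1.1)) ∩ Iio p.2.1)

variable {C : Ordinal.{u} → Set Ordinal.{u}} {γ : Ordinal.{u}}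

theorem subset_Iio_of_mem_squareTraces {x : Set Ordinal.{u}} (hx : x ∈ squareTraces C l γ) :
    x ⊆ Iio γ := by
  rcases hx with ⟨t, rfl⟩ | ⟨p, rfl⟩
  · rintro _ ⟨y, -, rfl⟩
    exact y.2
  · exact fun y hy => mem_Iio.2 ((mem_Iio.1 hy.2).trans_le p.2.2)

theorem mem_squareTraces_of_finite {x : Set Ordinal.{u}} (hfin : x.Finite) (hsub : x ⊆ Iio γ) :
    x ∈ squareTraces C l γ := by
  refine Or.inl ⟨(hfin.preimage Subtype.val_injective.injOn).toFinset, ?_⟩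
  simp only [Finite.coe_toFinset, Subtype.image_preimage_coe, inter_eq_right.2 hsub]

theorem mk_squareTraces_le (hl : ℵ₀ ≤ l) (hγ : γ.card ≤ l) :
    #(squareTraces C l γ) ≤ lift.{u+1} l := by
  have hl' : ℵ₀ ≤ lift.{u+1} l := aleph0_le_lift.2 hl
  calc #(squareTraces C l γ)
      ≤ #(Finset (Iio γ)) + #(Iic l.ord × Iic γ) := (mk_union_le _ _).trans
        (add_le_add mk_range_le mk_range_le)
    _ ≤ lift.{u+1} l + lift.{u+1} l * lift.{u+1} l := by
        rw [mk_prod, Cardinal.lift_id, Cardinal.lift_id]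
        gcongr
        · exact mk_finset_le hl' (mk_Iio_le hγ)
        · exact mk_Iic_le hl (by rw [card_ord])
        · exact mk_Iic_le hl hγ
    _ = lift.{u+1} l := by rw [mul_eq_self hl', add_eq_self hl']

end Cardinality

section Approachability

def IsApproachable (P : Ordinal.{u} → Set (Set Ordinal.{u})) (α : Ordinal.{u}) : Prop :=
  ∃ x : Set Ordinal.{u}, x ⊆ Iio α ∧ otp x < Ordinal.lift.{u+1} α ∧ sSup x = α ∧
    ∀ β < α, x ∩ Iio β ∈ ⋃ γ ∈ Iio α, P γ

variable {α : Ordinal.{u}}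

theorem sSup_eq_of_forall_lt_exists_gt {x : Set Ordinal.{u}} (hα : α ≠ 0) (hsub : x ⊆ Iio α)
    (hcofinal : ∀ β < α, ∃ d ∈ x, β < d) : sSup x = α := by
  obtain ⟨d, hd, -⟩ := hcofinal 0 (pos_iff_ne_zero.2 hα)
  exact csSup_eq_of_forall_le_of_forall_lt_exists_gt ⟨d, hd⟩ (fun _ hy => (hsub hy).le) hcofinal

theorem omega0_lt_of_ord_cof_lt (hα : IsSuccLimit α) (hcof : α.cof.ord < α) : ω < α :=
  (omega0_le_of_isSuccLimit hα).lt_of_ne (by rintro rfl; simp at hcof)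

theorem isApproachable_of_isLimitPointOf_cofinal {l : Cardinal.{u}}
    {C : Ordinal.{u} → Set Ordinal.{u}} (hα : IsSuccLimit α) (hcof : α.cof.ord < α)
    (hclub : IsClubIn (C α) α) (hotp : otp (C α) ≤ Ordinal.lift.{u+1} l.ord)
    (hcoh : ∀ δ < α, IsLimitPointOf (C α) δ → C δ = C α ∩ Iio δ)
    (hlim : ∀ β < α, ∃ δ < α, β ≤ δ ∧ IsLimitPointOf (C α) δ) :
    IsApproachable (squareTraces C l) α := by
  obtain ⟨ρ, hρ⟩ := mem_range_lift_of_le hotp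
  set x := elemsAtPositions (C α) (cofinalPositions (otp (C α)))
  have hxsub : x ⊆ Iio α := elemsAtPositions_subset.trans hclub.1.1
  refine ⟨x, hxsub, ?_, sSup_eq_of_forall_lt_exists_gt hα.ne_bot hxsub fun w hw => ?_,
    fun β hβ => ?_⟩
  · calc otp x ≤ (otp (C α)).cof.ord := otp_elemsAtPositions_cofinalPositions_le _
      _ = Ordinal.lift.{u+1} α.cof.ord := by rw [cof_otp_eq hclub.1.1 hclub.2, Cardinal.lift_ord]
      _ < Ordinal.lift.{u+1} α := lift_lt.2 hcof
  · obtain ⟨d, hd, hwd⟩ := hclub.2 w hw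
    obtain ⟨d', hd', hdd'⟩ := exists_mem_elemsAtPositions_cofinalPositions_le hd
    exact ⟨d', hd', hwd.trans_le hdd'⟩
  · obtain ⟨δ, hδ, hβδ, hδlim⟩ := hlim β hβ
    have hseg : x ∩ Iio β =
        elemsAtPositions (C δ) (cofinalPositions (Ordinal.lift.{u+1} ρ)) ∩ Iio β := by
      rw [← inter_Iio_inter_Iio hβδ, elemsAtPositions_inter_Iio, hcoh δ hδ hδlim, hρ]
    rw [hseg]
    exact mem_iUnion₂.2 ⟨δ, hδ, Or.inr
      ⟨(⟨ρ, lift_le.1 (hρ.trans_le hotp)⟩, ⟨β, hβδ⟩), rfl⟩⟩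

theorem isApproachable_of_isLimitPointOf_bounded {P : Ordinal.{u} → Set (Set Ordinal.{u})}
    (hP : ∀ γ x, x.Finite → x ⊆ Iio γ → x ∈ P γ) {D : Set Ordinal.{u}} (hα : IsSuccLimit α)
    (hcof : α.cof.ord < α) (hsub : D ⊆ Iio α) (hcofinal : ∀ β < α, ∃ d ∈ D, β < d)
    {β₀ : Ordinal.{u}} (hβ₀ : β₀ < α) (hbd : ∀ δ < α, β₀ ≤ δ → ¬IsLimitPointOf D δ) :
    IsApproachable P α := by
  set x := D ∩ Ioi β₀
  have hxsub : x ⊆ Iio α := inter_subset_left.trans hsub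
  have hfin : ∀ β < α, (x ∩ Iio β).Finite := fun β hβ =>
    finite_inter_Iio_of_forall_not_isLimitPointOf fun μ hμ hμlim => by
      obtain ⟨y, ⟨-, hβ₀y⟩, hyμ⟩ := hμlim.1
      exact hbd μ (hμ.trans_lt hβ) (lt_trans hβ₀y hyμ).le (hμlim.mono inter_subset_left)
  refine ⟨x, hxsub, ?_, sSup_eq_of_forall_lt_exists_gt hα.ne_bot hxsub fun w hw => ?_,
    fun β hβ => mem_iUnion₂.2 ⟨β, hβ, hP β _ (hfin β hβ) inter_subset_right⟩⟩
  · calc otp x ≤ ω := otp_le_omega0 fun d hd => hfin d (hxsub hd)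
      _ = Ordinal.lift.{u+1} ω := lift_omega0.symm
      _ < Ordinal.lift.{u+1} α := lift_lt.2 (omega0_lt_of_ord_cof_lt hα hcof)
  · obtain ⟨d, hd, hd'⟩ := hcofinal (max w β₀) (max_lt hw hβ₀)
    exact ⟨d, ⟨hd, (le_max_right _ _).trans_lt hd'⟩, (le_max_left _ _).trans_lt hd'⟩

end Approachability

/-- If `l` is an infinite cardinal and `□_l` holds, then `l⁺ ∈ I[l⁺]`. -/
theorem square_implies_succ_mem_idealI (l : Cardinal.{u}) (hl : ℵ₀ ≤ l)
    (hsq : SquarePrinciple l) :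
    MemIdealI (Order.succ l) (Set.Iio (Order.succ l).ord) := by
  obtain ⟨C, hC⟩ := hsq
  have hκ : IsSuccLimit (succ l).ord := Cardinal.isSuccLimit_ord (hl.trans (le_succ l))
  have hlκ : l.ord < (succ l).ord := Cardinal.ord_lt_ord.2 (lt_succ l)
  refine ⟨subset_rfl, ⟨_, isClubIn_Ioo hκ hlκ, fun δ _ hδ => (ord_cof_lt_of_mem_Ioo hδ).ne⟩,
    squareTraces C l, fun γ hγ => ⟨fun _ => subset_Iio_of_mem_squareTraces, ?_⟩,
    fun α hα hlim hcof => ?_⟩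
  · exact (mk_squareTraces_le hl (lt_succ_iff.1 (Cardinal.lt_ord.1 hγ))).trans_lt
      (Cardinal.lift_lt.2 (lt_succ l))
  obtain ⟨hclub, hotp, hcoh⟩ := hC α hlim hα
  by_cases hcofinal : ∀ β < α, ∃ δ < α, β ≤ δ ∧ IsLimitPointOf (C α) δ
  · exact isApproachable_of_isLimitPointOf_cofinal hlim hcof hclub hotp
      (fun δ hδ h => hcoh δ hδ h.1 h.2) hcofinal
  · push Not at hcofinal
    obtain ⟨β₀, hβ₀, hbd⟩ := hcofinal
    exact isApproachable_of_isLimitPointOf_bounded (fun _ _ => mem_squareTraces_of_finite)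
      hlim hcof hclub.1.1 hclub.2 hβ₀ hbd
end

section
/- Let λ be a singular strong limit cardinal. Then λ⁺ ∈ I[λ⁺] if and only if S^{λ⁺}_τ ∈ I[λ⁺] for every regular cardinal τ < λ. -/
set_option autoImplicit false
open Cardinal

universe u

open Cardinal Set

/-- `S^{λ⁺}_τ`: the set of ordinals below `λ⁺` of cofinality `τ`. -/
def cofSet (l τ : Cardinal.{u}) : Set Ordinal.{u} :=
  {α | α < (Order.succ l).ord ∧ α.cof = τ}

/-! The witnesses for the sets `S^{λ⁺}_τ` glue together: there are at most `λ` regular `τ < λ`,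
so the pointwise union of their sequences `P^τ_α` still consists of families of size
`≤ λ < λ⁺`, and every limit `α < λ⁺` lies in `S^{λ⁺}_{cf α}` with `cf α` regular and `< λ`
(`cf α ≤ λ`, and `cf α = λ` would make `λ` regular). Regular ordinals are excluded by the club
`[λ, λ⁺)`, whose only candidate `λ` is singular. -/

open Ordinal

def IsApproachedBy (P : Ordinal.{u} → Set (Set Ordinal.{u})) (α : Ordinal.{u}) : Prop :=
  ∃ x : Set Ordinal.{u}, x ⊆ Iio α ∧ otp x < Ordinal.lift.{u+1} α ∧ sSup x = α ∧
    ∀ β < α, x ∩ Iio β ∈ ⋃ γ ∈ Iio α, P γ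

def IsApproachSeq (κ : Cardinal.{u}) (P : Ordinal.{u} → Set (Set Ordinal.{u})) : Prop :=
  ∀ α < κ.ord, (∀ x ∈ P α, x ⊆ Iio α) ∧ #(P α) < Cardinal.lift.{u+1} κ

theorem memIdealI_iff {κ : Cardinal.{u}} {A : Set Ordinal.{u}} :
    MemIdealI κ A ↔ A ⊆ Iio κ.ord ∧
      (∃ E : Set Ordinal.{u}, IsClubIn E κ.ord ∧ ∀ δ ∈ A, δ ∈ E → δ.cof.ord ≠ δ) ∧
      ∃ P, IsApproachSeq κ P ∧
        ∀ α ∈ A, Order.IsSuccLimit α → α.cof.ord < α → IsApproachedBy P α :=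
  Iff.rfl

theorem MemIdealI.mono {κ : Cardinal.{u}} {A B : Set Ordinal.{u}} (hAB : A ⊆ B)
    (hB : MemIdealI κ B) : MemIdealI κ A := by
  obtain ⟨hBκ, ⟨E, hE, hEB⟩, P, hP, hPB⟩ := memIdealI_iff.1 hB
  exact ⟨hAB.trans hBκ, ⟨E, hE, fun δ hδ => hEB δ (hAB hδ)⟩, P, hP,
    fun α hα => hPB α (hAB hα)⟩

theorem IsApproachedBy.mono {P Q : Ordinal.{u} → Set (Set Ordinal.{u})} {α : Ordinal.{u}}
    (hPQ : ∀ γ, P γ ⊆ Q γ) (hP : IsApproachedBy P α) : IsApproachedBy Q α := by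
  obtain ⟨x, hxα, hotp, hsup, hseg⟩ := hP
  refine ⟨x, hxα, hotp, hsup, fun β hβ => ?_⟩
  obtain ⟨γ, hγ, hx⟩ := mem_iUnion₂.1 (hseg β hβ)
  exact mem_iUnion₂.2 ⟨γ, hγ, hPQ γ hx⟩

theorem isApproachSeq_iUnion {l : Cardinal.{u}} (hl : ℵ₀ ≤ l) {ι : Type (u + 1)}
    (hι : #ι ≤ Cardinal.lift.{u+1} l) {P : ι → Ordinal.{u} → Set (Set Ordinal.{u})}
    (hP : ∀ i, IsApproachSeq (Order.succ l) (P i)) :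
    IsApproachSeq (Order.succ l) fun α => ⋃ i, P i α := by
  intro α hα
  refine ⟨fun x hx => ?_, ?_⟩
  · obtain ⟨i, hxi⟩ := mem_iUnion.1 hx
    exact (hP i α hα).1 x hxi
  · have hPi : ∀ i, #(P i α) ≤ Cardinal.lift.{u+1} l := fun i =>
      Order.lt_succ_iff.1 (Cardinal.lift_succ l ▸ (hP i α hα).2)
    calc #(⋃ i, P i α)
        ≤ #ι * ⨆ i, #(P i α) := mk_iUnion_le _
      _ ≤ Cardinal.lift.{u+1} l * Cardinal.lift.{u+1} l := mul_le_mul' hι (ciSup_le' hPi)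
      _ = Cardinal.lift.{u+1} l := mul_eq_self (aleph0_le_lift.2 hl)
      _ < Cardinal.lift.{u+1} (Order.succ l) := by rw [Cardinal.lift_succ]; exact Order.lt_succ _

theorem isClubIn_Ico {a δ : Ordinal.{u}} (hδ : Order.IsSuccLimit δ) (ha : a < δ) :
    IsClubIn (Ico a δ) δ := by
  refine ⟨⟨Ico_subset_Iio_self, fun s hs ⟨b, hb⟩ hsδ => ⟨?_, hsδ⟩⟩, fun α hα => ?_⟩
  · exact (hs hb).1.trans (le_csSup ⟨δ, fun x hx => (hs hx).2.le⟩ hb)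
  · exact ⟨max (Order.succ α) a, ⟨le_max_right _ _, max_lt (hδ.succ_lt hα) ha⟩,
      (Order.lt_succ α).trans_le (le_max_left _ _)⟩

theorem Cardinal.mk_Iio_le_lift (c : Cardinal.{u}) : #(Iio c) ≤ Cardinal.lift.{u+1} c := by
  have hinj : Function.Injective fun τ : Iio c => (⟨τ.1.ord, ord_lt_ord.2 τ.2⟩ : Iio c.ord) :=
    fun a b hab => Subtype.ext (ord_injective (congrArg Subtype.val hab))
  simpa only [mk_Iio_ordinal, card_ord] using mk_le_of_injective hinj

theorem cof_lt_of_lt_ord_succ {l : Cardinal.{u}} (hsing : l.ord.cof < l) {α : Ordinal.{u}}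
    (hα : α < (Order.succ l).ord) : α.cof < l := by
  have hle : α.cof ≤ l := (cof_le_card α).trans (Order.lt_succ_iff.1 (lt_ord.1 hα))
  refine hle.lt_of_ne fun heq => hsing.ne ?_
  rw [← heq, cof_ord_cof]

theorem ord_cof_ne_of_mem_Ico {l : Cardinal.{u}} (hsing : l.ord.cof < l) {δ : Ordinal.{u}}
    (hδ : δ ∈ Ico l.ord (Order.succ l).ord) :
    δ.cof.ord ≠ δ := fun heq =>
  (cof_lt_of_lt_ord_succ hsing hδ.2).not_ge (ord_le_ord.1 (hδ.1.trans_eq heq.symm))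

/-- For a singular strong limit cardinal `l`, `l⁺ ∈ I[l⁺]` if and only if
`S^{l⁺}_τ ∈ I[l⁺]` for every regular cardinal `τ < l`. -/
theorem succ_mem_idealI_iff_cofSets (l : Cardinal.{u})
    (hsing : l.ord.cof < l) (hstrong : ∀ μ < l, 2 ^ μ < l) :
    MemIdealI (Order.succ l) (Set.Iio (Order.succ l).ord) ↔
      ∀ τ : Cardinal.{u}, τ.IsRegular → τ < l →
        MemIdealI (Order.succ l) (cofSet l τ) := by
  refine ⟨fun h τ _ _ => h.mono fun α hα => hα.1, fun H => ?_⟩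
  have hl : ℵ₀ ≤ l := (IsStrongLimit.mk (ne_bot_of_gt hsing) fun _ => hstrong _).aleph0_le
  let ι : Set Cardinal.{u} := {τ | τ.IsRegular ∧ τ < l}
  choose P hP hPτ using fun τ : ι => (memIdealI_iff.1 (H τ.1 τ.2.1 τ.2.2)).2.2
  have hι : #ι ≤ Cardinal.lift.{u+1} l :=
    (mk_le_mk_of_subset fun _ hτ => hτ.2).trans (mk_Iio_le_lift l)
  have hsucc : Order.IsSuccLimit (Order.succ l).ord := isSuccLimit_ord (hl.trans (Order.le_succ l))
  refine memIdealI_iff.2 ⟨subset_rfl, ⟨Ico l.ord (Order.succ l).ord,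
    isClubIn_Ico hsucc (ord_lt_ord.2 (Order.lt_succ l)),
    fun δ _ hδ => ord_cof_ne_of_mem_Ico hsing hδ⟩, _, isApproachSeq_iUnion hl hι hP,
    fun α hα hlim hcof => ?_⟩
  let τ : ι := ⟨α.cof, isRegular_cof hlim, cof_lt_of_lt_ord_succ hsing hα⟩
  exact (hPτ τ α ⟨hα, rfl⟩ hlim hcof).mono fun γ => subset_iUnion (fun i => P i γ) τ
end

section
/- Let n ≥ 1 be a natural number and σ a regular infinite cardinal. Suppose {A_α : α < κ} is a point-finite family of sets satisfying |A_α| ≤ σ^{+n} for each α and |A_α ∩ A_β| ≤ σ for each pair of distinct α, β < κ. Then there are sets A'_α ⊆ A_α with |A'_α| ≤ σ for each α such that the family {A_α \ A'_α : α < κ} is point-< n+1. -/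
/-!
Induction on `n`; for `n = 0` one removes everything. In the inductive step, point-finiteness
lets each `A α` meet at most `σ⁺⁽ⁿ⁺¹⁾` other members, so the components of the intersection
graph have size at most `σ⁺⁽ⁿ⁺¹⁾` and can be treated separately. Well-order a component so that
every proper initial segment has size at most `σ⁺ⁿ`, and let `T α` be the part of `A α` covered
by earlier members: `|T α| ≤ σ⁺ⁿ`, so the induction hypothesis yields small `R α ⊆ T α` with
`T \ R` point-`< n + 1`. A point lying in `A α \ R α` for `n + 2` indices lies in `A` of the
first of them, hence in `T β \ R β` for the other `n + 1`, which is impossible.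
-/

set_option autoImplicit false
open Cardinal

universe u v

/-- A family `⟨A_α⟩_{α ∈ ι}` of sets is point-`< τ` if for every index set `I ⊆ ι` of
cardinality `τ` the intersection `⋂_{α ∈ I} A_α` is empty. -/
def PointLt {ι : Type u} {X : Type v} (τ : Cardinal.{u}) (A : ι → Set X) : Prop :=
  ∀ I : Set ι, Cardinal.mk I = τ → ⋂ α ∈ I, A α = ∅

open Set Function Relation

universe w

theorem lift_mk_iUnion_le_of_le {ι : Type u} {X : Type v} {κ : Cardinal.{w}} (hκ : ℵ₀ ≤ κ)
    (f : ι → Set X) (hι : lift.{w} #ι ≤ lift.{u} κ) (hf : ∀ i, lift.{w} #(f i) ≤ lift.{v} κ) :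
    lift.{w} #(⋃ i, f i) ≤ lift.{v} κ := by
  obtain ⟨h⟩ : Nonempty (ι ↪ κ.out) := lift_mk_le'.1 (by rwa [mk_out])
  have g : ∀ i, f i ↪ κ.out := fun i => (lift_mk_le'.1 (by rw [mk_out]; exact hf i)).some
  let toSigma : (⋃ i, f i) ↪ Σ i, f i :=
    ⟨surjInv (sigmaToiUnion_surjective f), injective_surjInv _⟩
  let toPair : (Σ i, f i) ↪ κ.out × κ.out :=
    ⟨fun p => (h p.1, g p.1 p.2), by
      rintro ⟨i, a⟩ ⟨j, b⟩ hab
      obtain rfl : i = j := h.injective (congrArg Prod.fst hab)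
      obtain rfl : a = b := (g i).injective (congrArg Prod.snd hab)
      rfl⟩
  calc lift.{w} #(⋃ i, f i) ≤ lift.{v} #(κ.out × κ.out) := lift_mk_le'.2 ⟨toSigma.trans toPair⟩
    _ = lift.{v} κ := by rw [mk_prod, lift_id, mk_out, mul_eq_self hκ]

theorem lift_mk_biUnion_le_of_le {ι : Type u} {X : Type v} {κ : Cardinal.{w}} (hκ : ℵ₀ ≤ κ)
    (f : ι → Set X) (s : Set ι) (hs : lift.{w} #s ≤ lift.{u} κ)
    (hf : ∀ i ∈ s, lift.{w} #(f i) ≤ lift.{v} κ) :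
    lift.{w} #(⋃ i ∈ s, f i) ≤ lift.{v} κ := by
  rw [biUnion_eq_iUnion]
  exact lift_mk_iUnion_le_of_le hκ _ hs fun i => hf i i.2

theorem lift_mk_setOf_reflTransGen_le {ι : Type u} {r : ι → ι → Prop} {κ : Cardinal.{w}}
    (hκ : ℵ₀ ≤ κ) (hr : ∀ a, lift.{w} #{b | r a b} ≤ lift.{u} κ) (a : ι) :
    lift.{w} #{b | ReflTransGen r a b} ≤ lift.{u} κ := by
  have hκ' : ℵ₀ ≤ lift.{u} κ := aleph0_le_lift.2 hκ
  let grow : Set ι → Set ι := fun s => ⋃ b ∈ s, insert b {c | r b c}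
  have hgrow : ∀ s : Set ι, lift.{w} #s ≤ lift.{u} κ → lift.{w} #(grow s) ≤ lift.{u} κ :=
    fun s hs => lift_mk_biUnion_le_of_le hκ _ s hs fun b _ =>
      calc lift.{w} #(insert b {c | r b c} : Set ι) ≤ lift.{w} #{c | r b c} + 1 := by
            simpa using lift_le.2 (mk_insert_le (a := b) (s := {c | r b c}))
        _ ≤ lift.{u} κ := add_le_of_le hκ' (hr b) (one_le_aleph0.trans hκ')
  have hsize : ∀ k, lift.{w} #(grow^[k] {a}) ≤ lift.{u} κ := by
    intro k
    induction k with
    | zero => simpa using one_le_aleph0.trans hκ'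
    | succ k ih => rw [iterate_succ_apply']; exact hgrow _ ih
  have hcover : {b | ReflTransGen r a b} ⊆ ⋃ k, grow^[k] {a} := by
    intro b hb
    induction hb with
    | refl => exact mem_iUnion.2 ⟨0, rfl⟩
    | tail _ hbc ih =>
      obtain ⟨k, hk⟩ := mem_iUnion.1 ih
      exact mem_iUnion.2 ⟨k + 1, by
        rw [iterate_succ_apply']; exact mem_biUnion hk (mem_insert_of_mem _ hbc)⟩
  refine (lift_le.2 (mk_le_mk_of_subset hcover)).trans ?_
  exact lift_mk_iUnion_le_of_le hκ _ (by simpa using hκ) hsize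

theorem lift_mk_fiber_setOf_reflTransGen_le {ι : Type u} {r : ι → ι → Prop} {κ : Cardinal.{w}}
    (hκ : ℵ₀ ≤ κ) (hr : ∀ a, lift.{w} #{b | r a b} ≤ lift.{u} κ) (q : Set ι) :
    lift.{w} #{a // {b | ReflTransGen r a b} = q} ≤ lift.{u} κ := by
  rcases isEmpty_or_nonempty {a // {b | ReflTransGen r a b} = q} with _ | ⟨⟨a₀, rfl⟩⟩
  · simp
  refine (lift_le.2 (mk_le_mk_of_subset fun a (ha : _ = _) => ?_)).trans
    (lift_mk_setOf_reflTransGen_le hκ hr a₀)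
  rw [← ha]
  exact ReflTransGen.refl

theorem exists_isWellOrder_lift_mk_setOf_le {ι : Type u} {κ : Cardinal.{v}}
    (hι : lift.{v} #ι ≤ lift.{u} (Order.succ κ)) :
    ∃ (r : ι → ι → Prop) (_ : IsWellOrder ι r), ∀ α, lift.{v} #{β | r β α} ≤ lift.{u} κ := by
  obtain ⟨r, _, hr⟩ := exists_ord_eq ι
  refine ⟨r, inferInstance, fun α => ?_⟩
  have hlt : #{β // r β α} < #ι := by simpa using card_typein_lt α hr
  rw [← Order.lt_succ_iff, ← lift_succ]
  exact (lift_lt.2 hlt).trans_le hι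

section PointLt

variable {ι : Type u} {X : Type v} {τ : Cardinal.{u}} {A B : ι → Set X}

theorem PointLt.mono (hA : PointLt τ A) (h : ∀ α, B α ⊆ A α) : PointLt τ B :=
  fun I hI => subset_eq_empty (iInter₂_mono fun α _ => h α) (hA I hI)

theorem PointLt.comp_injective {ι' : Type u} (hA : PointLt τ A) {f : ι' → ι}
    (hf : Injective f) : PointLt τ (A ∘ f) := by
  intro I hI
  rw [← hA (f '' I) (by rwa [mk_image_eq hf]), biInter_image]
  rfl

theorem PointLt.finite_setOf_mem (hA : PointLt ℵ₀ A) (x : X) : {α | x ∈ A α}.Finite := by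
  by_contra hinf
  obtain ⟨I, hIx, hI⟩ :=
    le_mk_iff_exists_subset.1 (infinite_iff.1 (infinite_coe_iff.2 hinf))
  have hx : x ∈ ⋂ α ∈ I, A α := mem_iInter₂.2 fun α hα => hIx hα
  rwa [hA I hI] at hx

theorem PointLt.lift_mk_setOf_inter_nonempty_le (hA : PointLt ℵ₀ A) {κ : Cardinal.{v}}
    (hκ : ℵ₀ ≤ κ) {α : ι} (hα : #(A α) ≤ κ) :
    lift.{v} #{β | (A α ∩ A β).Nonempty} ≤ lift.{u} κ := by
  have hcover : {β | (A α ∩ A β).Nonempty} = ⋃ x ∈ A α, {β | x ∈ A β} := by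
    ext β
    simp [Set.Nonempty]
  rw [hcover]
  refine lift_mk_biUnion_le_of_le hκ _ _ (lift_le.2 hα) fun x _ => ?_
  exact lift_le_aleph0.2 (hA.finite_setOf_mem x).lt_aleph0.le |>.trans (aleph0_le_lift.2 hκ)

theorem PointLt.of_fibers {Q : Type*} (p : ι → Q)
    (hp : ∀ α β, (A α ∩ A β).Nonempty → p α = p β) (hτ : τ ≠ 0)
    (h : ∀ q, PointLt τ fun b : {α // p α = q} => A b) : PointLt τ A := by
  intro I hI
  by_contra hne
  obtain ⟨x, hx⟩ := nonempty_iff_ne_empty.2 hne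
  obtain ⟨α₀, hα₀⟩ := nonempty_coe_sort.1 (mk_ne_zero_iff.1 (hI.trans_ne hτ))
  have hIp : I ⊆ range (Subtype.val : {α // p α = p α₀} → ι) := fun β hβ =>
    ⟨⟨β, hp β α₀ ⟨x, mem_iInter₂.1 hx β hβ, mem_iInter₂.1 hx α₀ hα₀⟩⟩, rfl⟩
  have hempty := h (p α₀) (Subtype.val ⁻¹' I)
    (by rw [mk_preimage_of_injective_of_subset_range _ _ Subtype.val_injective hIp, hI])
  exact eq_empty_iff_forall_notMem.1 hempty x (mem_iInter₂.2 fun b hb => mem_iInter₂.1 hx b hb)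

def priorOverlap (r : ι → ι → Prop) (A : ι → Set X) (α : ι) : Set X :=
  A α ∩ ⋃ β ∈ {β | r β α}, A β

theorem mk_priorOverlap_le {r : ι → ι → Prop} [Std.Irrefl r] {κ : Cardinal.{v}} (hκ : ℵ₀ ≤ κ)
    (hr : ∀ α, lift.{v} #{β | r β α} ≤ lift.{u} κ)
    (hA : ∀ α β, α ≠ β → #↥(A α ∩ A β) ≤ κ) (α : ι) : #(priorOverlap r A α) ≤ κ := by
  rw [priorOverlap, inter_iUnion₂, ← lift_le.{v}]
  exact lift_mk_biUnion_le_of_le hκ _ _ (hr α) fun β hβ =>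
    lift_le.2 (hA α β (ne_of_irrefl hβ).symm)

theorem PointLt.add_one_of_priorOverlap (r : ι → ι → Prop) [IsWellOrder ι r] {R : ι → Set X}
    (h : PointLt τ fun α => priorOverlap r A α \ R α) :
    PointLt (τ + 1) fun α => A α \ R α := by
  intro I hI
  by_contra hne
  obtain ⟨x, hx⟩ := nonempty_iff_ne_empty.2 hne
  have hxI : ∀ α ∈ I, x ∈ A α ∧ x ∉ R α := fun α hα => mem_iInter₂.1 hx α hα
  have hIne : I.Nonempty := nonempty_coe_sort.1 (mk_ne_zero_iff.1 (by simp [hI]))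
  have hwf : WellFounded r := IsWellFounded.wf
  set α₀ := hwf.min I hIne
  have hα₀I : α₀ ∈ I := hwf.min_mem I hIne
  have hfirst : ∀ β ∈ I, β ≠ α₀ → r α₀ β := fun β hβ hβα₀ =>
    ((trichotomous_of r α₀ β).resolve_right (by
      rintro (rfl | hr)
      exacts [hβα₀ rfl, hwf.not_lt_min I hβ hr]))
  have hI' : #(I \ {α₀} : Set ι) = τ := by
    rw [← add_one_inj, ← hI, ← mk_insert (fun h => h.2 rfl), insert_sdiff_singleton,
      insert_eq_of_mem hα₀I]
  refine (eq_empty_iff_forall_notMem.1 (h _ hI') x) (mem_iInter₂.2 fun β hβ => ?_)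
  exact ⟨⟨(hxI β hβ.1).1, mem_biUnion (hfirst β hβ.1 hβ.2) (hxI α₀ hα₀I).1⟩, (hxI β hβ.1).2⟩

end PointLt

section PointLtModulo

variable {ι : Type u} {X : Type v} {σ : Cardinal.{v}} {τ : Cardinal.{u}} {A : ι → Set X}

def PointLtModulo (σ : Cardinal.{v}) (τ : Cardinal.{u}) (A : ι → Set X) : Prop :=
  ∃ A' : ι → Set X, (∀ α, A' α ⊆ A α ∧ #(A' α) ≤ σ) ∧ PointLt τ fun α => A α \ A' α

theorem PointLtModulo.of_forall_mk_le (hA : ∀ α, #(A α) ≤ σ) (hτ : τ ≠ 0) :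
    PointLtModulo σ τ A := by
  refine ⟨A, fun α => ⟨subset_rfl, hA α⟩, fun I hI => ?_⟩
  obtain ⟨α, hα⟩ := nonempty_coe_sort.1 (mk_ne_zero_iff.1 (hI.trans_ne hτ))
  exact subset_eq_empty (biInter_subset_of_mem hα) Set.sdiff_self

theorem PointLtModulo.of_fibers {Q : Type*} (p : ι → Q)
    (hp : ∀ α β, (A α ∩ A β).Nonempty → p α = p β) (hτ : τ ≠ 0)
    (h : ∀ q, PointLtModulo σ τ fun b : {α // p α = q} => A b) : PointLtModulo σ τ A := by
  choose R hR hpt using h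
  refine ⟨fun α => R (p α) ⟨α, rfl⟩, fun α => hR _ _, ?_⟩
  refine PointLt.of_fibers p (fun α β hαβ => hp α β
    (hαβ.mono (inter_subset_inter sdiff_subset sdiff_subset))) hτ fun q => ?_
  convert hpt q using 2 with b
  obtain ⟨β, rfl⟩ := b
  rfl

theorem PointLtModulo.add_one_of_priorOverlap (r : ι → ι → Prop) [IsWellOrder ι r]
    (h : PointLtModulo σ τ (priorOverlap r A)) : PointLtModulo σ (τ + 1) A := by
  obtain ⟨R, hR, hpt⟩ := h
  exact ⟨R, fun α => ⟨(hR α).1.trans inter_subset_left, (hR α).2⟩, hpt.add_one_of_priorOverlap r⟩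

end PointLtModulo

theorem pointLtModulo_of_mk_le_iterate_succ {X : Type v} {σ : Cardinal.{v}} (hσ : ℵ₀ ≤ σ)
    (n : ℕ) {ι : Type u} (A : ι → Set X) (hpf : PointLt ℵ₀ A)
    (hcard : ∀ α, #(A α) ≤ Order.succ^[n] σ) (hint : ∀ α β, α ≠ β → #↥(A α ∩ A β) ≤ σ) :
    PointLtModulo σ (n + 1) A := by
  induction n generalizing ι with
  | zero => exact PointLtModulo.of_forall_mk_le hcard (by simp)
  | succ n ih =>
    set κ := Order.succ^[n] σ
    have hκ : ℵ₀ ≤ κ := hσ.trans (Order.le_succ_iterate n σ)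
    have hμ : ℵ₀ ≤ Order.succ κ := hκ.trans (Order.le_succ κ)
    rw [iterate_succ_apply'] at hcard
    let component : ι → Set ι := fun α => {β | ReflTransGen (fun α β => (A α ∩ A β).Nonempty) α β}
    refine PointLtModulo.of_fibers component (fun α β hαβ => ?_) (by simp) fun q => ?_
    · ext γ
      exact ⟨fun h => ReflTransGen.head (by rwa [inter_comm]) h, ReflTransGen.head hαβ⟩
    · have hfiber : lift.{v} #{α // component α = q} ≤ lift.{u} (Order.succ κ) :=
        lift_mk_fiber_setOf_reflTransGen_le hμ
          (fun α => hpf.lift_mk_setOf_inter_nonempty_le hμ (hcard α)) q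
      obtain ⟨r, _, hr⟩ := exists_isWellOrder_lift_mk_setOf_le hfiber
      have hint' : ∀ α β : {α // component α = q}, α ≠ β → #↥(A α ∩ A β) ≤ σ :=
        fun α β h => hint α β (Subtype.val_injective.ne h)
      rw [Nat.cast_succ]
      refine PointLtModulo.add_one_of_priorOverlap r (ih _ ?_ ?_ ?_)
      · exact (hpf.comp_injective Subtype.val_injective).mono fun _ => inter_subset_left
      · exact mk_priorOverlap_le hκ hr fun α β h =>
          (hint' α β h).trans (Order.le_succ_iterate n σ)
      · exact fun α β h => (mk_le_mk_of_subset
          (inter_subset_inter inter_subset_left inter_subset_left)).trans (hint' α β h)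

theorem pointFinite_refine_pointLtSucc_general {ι : Type u} {X : Type v}
    (n : ℕ) (σ : Cardinal.{v}) (hσ : σ.IsRegular)
    (A : ι → Set X)
    (hpf : PointLt ℵ₀ A)
    (hcard : ∀ α, Cardinal.mk (A α) ≤ (Order.succ)^[n] σ)
    (hint : ∀ α β, α ≠ β → Cardinal.mk ↥(A α ∩ A β) ≤ σ) :
    ∃ A' : ι → Set X, (∀ α, A' α ⊆ A α ∧ Cardinal.mk (A' α) ≤ σ) ∧
      PointLt (n + 1) (fun α => A α \ A' α) :=
  pointLtModulo_of_mk_le_iterate_succ hσ.aleph0_le n A hpf hcard hint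

/-- Let `n ≥ 1` and let `σ` be a regular infinite cardinal.  If `⟨A_α⟩` is a point-finite
family of sets with `|A_α| ≤ σ⁺ⁿ` and `|A_α ∩ A_β| ≤ σ` for distinct `α, β`, then one can
remove a set of size at most `σ` from each `A_α` so that the family becomes
point-`< n+1`. -/
theorem pointFinite_refine_pointLtSucc {ι : Type u} {X : Type v}
    (n : ℕ) (hn : 1 ≤ n) (σ : Cardinal.{v}) (hσ : σ.IsRegular)
    (A : ι → Set X)
    (hpf : PointLt ℵ₀ A)
    (hcard : ∀ α, Cardinal.mk (A α) ≤ (Order.succ)^[n] σ)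
    (hint : ∀ α β, α ≠ β → Cardinal.mk ↥(A α ∩ A β) ≤ σ) :
    ∃ A' : ι → Set X, (∀ α, A' α ⊆ A α ∧ Cardinal.mk (A' α) ≤ σ) ∧
      PointLt (n + 1) (fun α => A α \ A' α) :=
  pointFinite_refine_pointLtSucc_general n σ hσ A hpf hcard hint
end

section
/- For each natural number n ≥ 1 there exists a family 𝒜_n of sets, each of cardinality ℵ_n, such that: 𝒜_n is point-< n+1; (a) A ∩ B is finite for each pair of distinct A, B ∈ 𝒜_n; and (b) 𝒜_n has no point-<n refinement of the form {A \ A' : A ∈ 𝒜_n} where each A' ⊆ A is countable, i.e., for every assignment of countable sets A' ⊆ A (A ∈ 𝒜_n) the family {A \ A' : A ∈ 𝒜_n} is not point-<n. -/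
set_option autoImplicit false
open Cardinal

universe u v

lemma snoc_eq_update {n : ℕ} {κ : Type} (v : Fin n → κ) (c₀ c : κ) :
    (Fin.snoc v c : Fin (n+1) → κ) = Function.update (Fin.snoc v c₀ : Fin (n+1) → κ) (Fin.last n) c := by
  funext j
  refine Fin.lastCases ?_ (fun j => ?_) j
  · simp
  · simp [Fin.snoc_castSucc, Function.update_of_ne (Fin.castSucc_lt_last j).ne]

lemma free_lemma (n : ℕ) : ∀ (κ : Type), Cardinal.aleph n ≤ #κ →
    ∀ X : Fin n → Set (Fin n → κ),
    (∀ i (s : Fin n → κ), {c | Function.update s i c ∈ X i}.Countable) →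
    ∃ t, ∀ i, t ∉ X i := by
  induction n with
  | zero => exact fun κ _ X _ => ⟨Fin.elim0, fun i => i.elim0⟩
  | succ n IH =>
    intro κ hκ X hX
    have hκ0 : Nonempty κ := by
      rw [← Cardinal.mk_ne_zero_iff]
      have : (0:Cardinal) < aleph (n+1) := aleph_pos _
      exact (this.trans_le hκ).ne'
    obtain ⟨c₀⟩ := hκ0
    obtain ⟨S, hS⟩ : ∃ S : Set κ, #S = aleph n :=
      le_mk_iff_exists_set.1 ((aleph_le_aleph.2 (by exact_mod_cast Nat.le_succ n)).trans hκ)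
    -- the bad sets for the last coordinate
    set B : (Fin n → S) → Set κ :=
      fun u => {c | Fin.snoc (fun j => (u j : κ)) c ∈ X (Fin.last n)} with hB
    have hBc : ∀ u, (B u).Countable := by
      intro u
      have hcnt := hX (Fin.last n) (Fin.snoc (fun j => (u j : κ)) c₀)
      have he : B u = {c | Function.update (Fin.snoc (fun j => (u j : κ)) c₀ : Fin (n+1) → κ) (Fin.last n) c ∈ X (Fin.last n)} := by
        ext c
        simp only [hB, Set.mem_setOf_eq]
        rw [← snoc_eq_update]
      rw [he]; exact hcnt
    have hUlt : #(⋃ u, B u) < #κ := by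
      have h1 : #(⋃ u, B u) ≤ #(Fin n → S) * ⨆ u, #(B u) := mk_iUnion_le B
      have h2 : #(Fin n → S) ≤ aleph n := by
        have : #(Fin n → S) = (#S) ^ (n : Cardinal) := by
          rw [← Cardinal.power_def, Cardinal.mk_fin]
        rw [this, hS, Cardinal.power_natCast]
        exact Cardinal.power_nat_le (aleph0_le_aleph n)
      have h3 : (⨆ u, #(B u)) ≤ ℵ₀ := by
        rcases isEmpty_or_nonempty (Fin n → S) with h | h
        · simp [ciSup_of_empty]
        · exact ciSup_le fun u => (hBc u).le_aleph0
      calc #(⋃ u, B u) ≤ aleph n * ℵ₀ := h1.trans (mul_le_mul' h2 h3)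
        _ = aleph n := by
            rw [Cardinal.mul_eq_max (aleph0_le_aleph n) le_rfl]
            exact max_eq_left (aleph0_le_aleph n)
        _ < aleph (n+1) := aleph_lt_aleph.2 (by exact_mod_cast Nat.lt_succ_self n)
        _ ≤ #κ := hκ
    obtain ⟨c, hc⟩ : ∃ c : κ, ∀ u, c ∉ B u := by
      have : (⋃ u, B u) ≠ Set.univ := by
        intro h
        rw [h] at hUlt
        exact absurd Cardinal.mk_univ (by exact fun e => hUlt.ne e)
      obtain ⟨c, hc⟩ := Set.ne_univ_iff_exists_notMem _ |>.1 this
      exact ⟨c, fun u hu => hc (Set.mem_iUnion.2 ⟨u, hu⟩)⟩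
    -- the reduced problem
    set X' : Fin n → Set (Fin n → S) :=
      fun i => {u | Fin.snoc (fun j => (u j : κ)) c ∈ X i.castSucc} with hX'
    have hsec : ∀ (i : Fin n) (u : Fin n → S),
        {d | Function.update u i d ∈ X' i}.Countable := by
      intro i u
      have hcnt := hX i.castSucc (Fin.snoc (fun j => (u j : κ)) c)
      have : {d : S | Function.update u i d ∈ X' i} =
          (fun d : S => (d : κ)) ⁻¹'
            {e | Function.update (Fin.snoc (fun j => (u j : κ)) c) i.castSucc e
              ∈ X i.castSucc} := by
        ext d
        simp only [hX', Set.mem_setOf_eq, Set.mem_preimage]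
        have : (fun j => ((Function.update u i d j : κ))) =
            Function.update (fun j => (u j : κ)) i (d : κ) := by
          funext j
          rcases eq_or_ne j i with rfl | hji
          · simp
          · simp [Function.update_of_ne hji]
        rw [this, Fin.snoc_update]
      rw [this]
      exact hcnt.preimage Subtype.val_injective
    obtain ⟨u, hu⟩ := IH S (le_of_eq hS.symm) X' hsec
    refine ⟨Fin.snoc (fun j => (u j : κ)) c, fun i => ?_⟩
    refine Fin.lastCases ?_ (fun j => ?_) i
    · exact hc u
    · exact hu j

section Main

variable {κ : Type}

/-- The line through `s` in direction `i`. -/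
def line {n : ℕ} (i : Fin n) (s : Fin n → κ) : Set (Fin n → κ) :=
  {t | ∀ j, j ≠ i → t j = s j}

lemma line_eq_of_mem {n : ℕ} {i : Fin n} {s t : Fin n → κ} (h : t ∈ line i s) :
    line i s = line i t := by
  ext u
  constructor <;> intro hu j hj
  · rw [hu j hj, ← h j hj]
  · rw [hu j hj, h j hj]

lemma update_mem_line {n : ℕ} (i : Fin n) (s : Fin n → κ) (c : κ) :
    Function.update s i c ∈ line i s := by
  intro j hj
  rw [Function.update_of_ne hj]

lemma line_eq_range {n : ℕ} (i : Fin n) (s : Fin n → κ) :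
    line i s = Set.range (fun c => Function.update s i c) := by
  ext u
  constructor
  · intro hu
    refine ⟨u i, ?_⟩
    show Function.update s i (u i) = u
    funext j
    rcases eq_or_ne j i with rfl | hj
    · simp
    · rw [Function.update_of_ne hj, hu j hj]
  · rintro ⟨c, rfl⟩
    exact update_mem_line i s c

lemma update_inj {n : ℕ} (i : Fin n) (s : Fin n → κ) :
    Function.Injective (fun c : κ => Function.update s i c) := by
  intro c c' h
  have := congrFun h i
  simpa using this

lemma line_ne_line {n : ℕ} [Infinite κ] {i j : Fin n} (hij : i ≠ j) (t : Fin n → κ) :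
    line i t ≠ line j t := by
  obtain ⟨c, hc⟩ := exists_ne (t i)
  intro h
  have h1 : Function.update t i c ∈ line j t := h ▸ update_mem_line i t c
  have := h1 i hij
  rw [Function.update_self] at this
  exact hc this

/-- For each `n ≥ 1` there is a point-`< n+1` family `𝒜` of sets of size `ℵ_n` whose
pairwise intersections are finite, but such that no removal of countably many points
from each member yields a point-`< n` family. -/
theorem exists_pointLt_family_no_countable_refinement (n : ℕ) (hn : 1 ≤ n) :
    ∃ (X : Type) (𝒜 : Set (Set X)),
      (∀ A ∈ 𝒜, Cardinal.mk A = Cardinal.aleph n) ∧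
      PointLt ((n : Cardinal) + 1) (fun A : 𝒜 => (A : Set X)) ∧
      (∀ A ∈ 𝒜, ∀ B ∈ 𝒜, A ≠ B → (A ∩ B).Finite) ∧
      ∀ f : 𝒜 → Set X, (∀ A : 𝒜, f A ⊆ (A : Set X) ∧ (f A).Countable) →
        ¬ PointLt (n : Cardinal) (fun A : 𝒜 => (A : Set X) \ f A) := by
  set κ : Type := (Cardinal.aleph n).out with hκdef
  have hκ : #κ = Cardinal.aleph n := Cardinal.mk_out _
  have hκinf : Infinite κ := by
    rw [Cardinal.infinite_iff, hκ]; exact aleph0_le_aleph n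
  refine ⟨Fin n → κ, {A | ∃ (i : Fin n) (s : Fin n → κ), A = line i s}, ?_, ?_, ?_, ?_⟩
  · rintro A ⟨i, s, rfl⟩
    rw [line_eq_range, Cardinal.mk_range_eq _ (update_inj i s), hκ]
  · -- point-< n+1
    intro I hI
    rw [Set.eq_empty_iff_forall_notMem]
    intro t ht
    rw [Set.mem_iInter₂] at ht
    have hdir : ∀ A : I, ((A : _) : Set (Fin n → κ)) ∈ Set.range (fun i : Fin n => line i t) := by
      rintro ⟨⟨A, i, s, rfl⟩, hAI⟩
      exact ⟨i, (line_eq_of_mem (ht _ hAI)).symm⟩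
    choose dir hd using hdir
    have dinj : Function.Injective dir := by
      intro A B h
      apply Subtype.ext; apply Subtype.ext
      rw [← hd A, ← hd B, h]
    have hle : #I ≤ (n : Cardinal) := by
      have := Cardinal.mk_le_of_injective dinj
      rwa [Cardinal.mk_fin] at this
    rw [hI] at hle
    have : ((n+1 : ℕ) : Cardinal) ≤ ((n : ℕ) : Cardinal) := by push_cast; exact hle
    have := Nat.cast_le.mp this
    omega
  · -- pairwise finite
    rintro A ⟨i, s, rfl⟩ B ⟨i', s', rfl⟩ hAB
    rcases eq_or_ne i i' with rfl | hii
    · -- parallel lines: disjoint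
      have : line i s ∩ line i s' = ∅ := by
        by_contra h
        obtain ⟨u, hu1, hu2⟩ := Set.nonempty_iff_ne_empty.2 h
        exact hAB ((line_eq_of_mem hu1).trans (line_eq_of_mem hu2).symm)
      rw [this]; exact Set.finite_empty
    · refine Set.Subsingleton.finite ?_
      intro u ⟨hu1, hu2⟩ v ⟨hv1, hv2⟩
      funext j
      rcases eq_or_ne j i with rfl | hj
      · rw [hu2 j hii, hv2 j hii]
      · rw [hu1 j hj, hv1 j hj]
  · -- no countable refinement
    intro f hf hP
    have hmem : ∀ (i : Fin n) (t : Fin n → κ),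
        line i t ∈ {A | ∃ (i : Fin n) (s : Fin n → κ), A = line i s} := fun i t => ⟨i, t, rfl⟩
    set X' : Fin n → Set (Fin n → κ) :=
      fun i => {t | t ∈ f ⟨line i t, hmem i t⟩} with hX'
    have hsec : ∀ (i : Fin n) (s : Fin n → κ),
        {c | Function.update s i c ∈ X' i}.Countable := by
      intro i s
      have : {c | Function.update s i c ∈ X' i} =
          (fun c => Function.update s i c) ⁻¹' (f ⟨line i s, hmem i s⟩) := by
        ext c
        have he : (⟨line i (Function.update s i c), hmem i _⟩ : {A | ∃ (i : Fin n) (s : Fin n → κ), A = line i s}) = ⟨line i s, hmem i s⟩ :=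
          Subtype.ext (line_eq_of_mem (update_mem_line i s c)).symm
        simp only [hX', Set.mem_setOf_eq, Set.mem_preimage, he]
      rw [this]
      exact (hf ⟨line i s, hmem i s⟩).2.preimage (update_inj i s)
    obtain ⟨t, ht⟩ := free_lemma n κ hκ.ge X' hsec
    have ginj : Function.Injective (fun i : Fin n => (⟨line i t, hmem i t⟩ : {A | ∃ (i : Fin n) (s : Fin n → κ), A = line i s})) := by
      intro i j h
      by_contra hij
      exact line_ne_line hij t (congrArg Subtype.val h)
    have hI : #(Set.range fun i : Fin n => (⟨line i t, hmem i t⟩ : {A | ∃ (i : Fin n) (s : Fin n → κ), A = line i s})) = (n : Cardinal) := by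
      rw [Cardinal.mk_range_eq _ ginj, Cardinal.mk_fin]
    have := hP _ hI
    rw [Set.eq_empty_iff_forall_notMem] at this
    refine this t ?_
    refine Set.mem_iInter₂.mpr ?_
    rintro A ⟨i, rfl⟩
    exact ⟨fun j hj => rfl, ht i⟩

end Main
end

section
/- There is a point-finite family 𝒜 of sets such that A ∩ B is finite for each pair of distinct A, B ∈ 𝒜, and for every assignment of countable sets A' ⊆ A (A ∈ 𝒜), the family {A \ A' : A ∈ 𝒜} is not point-<n for any n ∈ ω. -/
/-!
Let `K₀ = ℕ` and `Kₙ₊₁ = 𝒫(Kₙ)`, and let `𝒜` be the family of axis-parallel lines in the disjoint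
union of the grids `Kₙⁿ`. A point of the `n`-th grid lies on exactly `n` lines, and two distinct
lines meet in at most one point. Removing a countable set from each line through the `n`-th grid is
a set mapping `x ↦ (Sᵢ(x))ᵢ` of countable sets with `Sᵢ(x)` independent of `xᵢ`, so Kuratowski's
free set theorem gives a point `x` with `xᵢ ∉ Sᵢ(x)` for all `i`: the `n` lines through `x` keep it.
The free point is found coordinate by coordinate: the last coordinate avoids the union of the
`|Kₙ₋₁|`-many countable sets indexed by the earlier coordinates ranging over `Kₙ₋₁`, and
`|Kₙ₋₁| < |Kₙ|`.
-/

set_option autoImplicit false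
open Cardinal

universe u v

open Function

theorem pointLt_aleph0_of_finite {ι : Type u} {X : Type v} {A : ι → Set X}
    (h : ∀ x, {i | x ∈ A i}.Finite) : PointLt ℵ₀ A := by
  intro I hI
  by_contra hne
  obtain ⟨x, hx⟩ := Set.nonempty_iff_ne_empty.2 hne
  have hfin : I.Finite := (h x).subset fun i hi => Set.mem_iInter₂.1 hx i hi
  exact (lt_aleph0_iff_set_finite.2 hfin).ne hI

theorem not_pointLt_of_injective {ι : Type u} {X : Type v} {A : ι → Set X} {n : ℕ}
    (e : Fin n → ι) (he : Injective e) (x : X) (hx : ∀ k, x ∈ A (e k)) :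
    ¬ PointLt n A := by
  intro h
  have hI : #(Set.range e) = n := by simpa using mk_range_eq_of_injective he
  have hmem : x ∈ ⋂ α ∈ Set.range e, A α := Set.mem_iInter₂.2 fun _ ⟨k, hk⟩ => hk ▸ hx k
  rwa [h _ hI] at hmem

/-- Kuratowski's free set property in dimension `n` for countable set mappings. -/
def HasFreePoints (n : ℕ) (K : Type*) : Prop :=
  ∀ S : Fin n → (Fin n → K) → Set K, (∀ i g, (S i g).Countable) →
    (∀ i g z, S i (update g i z) = S i g) → ∃ x : Fin n → K, ∀ i, x i ∉ S i x

theorem hasFreePoints_zero (K : Type*) : HasFreePoints 0 K :=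
  fun _ _ _ => ⟨finZeroElim, finZeroElim⟩

theorem exists_forall_notMem_of_countable {ι K : Type u} (T : ι → Set K)
    (hT : ∀ i, (T i).Countable) (hι : #ι < #K) (hK : ℵ₀ < #K) : ∃ γ, ∀ i, γ ∉ T i := by
  have hsup : ⨆ i, #(T i) < #K := (ciSup_le' fun i => (hT i).le_aleph0).trans_lt hK
  obtain ⟨γ, hγ⟩ := compl_nonempty_of_mk_lt_mk
    ((mk_iUnion_le T).trans_lt (mul_lt_of_lt hK.le hι hsup))
  exact ⟨γ, fun i hi => hγ (Set.mem_iUnion_of_mem i hi)⟩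

theorem mk_fin_arrow_le {K : Type u} [Infinite K] (n : ℕ) : #(Fin n → K) ≤ #K := by
  simpa using power_nat_le (c := #K) (n := n) (aleph0_le_mk K)

theorem HasFreePoints.succ {n : ℕ} {K' K : Type u} [Infinite K'] (h : HasFreePoints n K')
    (hlt : #K' < #K) : HasFreePoints (n + 1) K := by
  intro S hS hupd
  obtain ⟨e⟩ : Nonempty (K' ↪ K) := hlt.le
  let k₀ : K := e (Classical.arbitrary K')
  let ext (y : Fin n → K') (c : K) : Fin (n + 1) → K := Fin.snoc (e ∘ y) c
  obtain ⟨γ, hγ⟩ := exists_forall_notMem_of_countable (fun y => S (Fin.last n) (ext y k₀))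
    (fun _ => hS _ _) ((mk_fin_arrow_le n).trans_lt hlt) ((aleph0_le_mk K').trans_lt hlt)
  obtain ⟨y, hy⟩ := h (fun i y => e ⁻¹' S i.castSucc (ext y γ))
    (fun _ _ => (hS _ _).preimage e.injective)
    (fun i y z => by simp only [ext, comp_update, Fin.snoc_update, hupd])
  refine ⟨ext y γ, Fin.lastCases ?_ fun i => ?_⟩
  · have hlast : ext y γ = update (ext y k₀) (Fin.last n) γ := (Fin.update_snoc_last ..).symm
    rw [hlast, hupd, update_self]
    exact hγ y
  · simpa [ext] using hy i

namespace GridLines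

def tower : ℕ → Type
  | 0 => ℕ
  | n + 1 => Set (tower n)

instance instInfiniteTower : ∀ n, Infinite (tower n)
  | 0 => inferInstanceAs (Infinite ℕ)
  | n + 1 => have := instInfiniteTower n; inferInstanceAs (Infinite (Set (tower n)))

theorem hasFreePoints_tower : ∀ n, HasFreePoints n (tower n)
  | 0 => hasFreePoints_zero _
  | n + 1 => (hasFreePoints_tower n).succ (by simpa [tower, mk_set] using cantor #(tower n))

abbrev Grid : Type := Σ n, Fin n → tower n

def line (n : ℕ) (i : Fin n) (g : Fin n → tower n) : Set Grid :=
  Set.range fun z => ⟨n, update g i z⟩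

def lines : Set (Set Grid) := {A | ∃ n i g, A = line n i g}

theorem line_mem_lines (n : ℕ) (i : Fin n) (g : Fin n → tower n) : line n i g ∈ lines :=
  ⟨n, i, g, rfl⟩

@[simp]
theorem line_update (n : ℕ) (i : Fin n) (g : Fin n → tower n) (z : tower n) :
    line n i (update g i z) = line n i g := by
  simp [line]

theorem mk_mem_line (n : ℕ) (i : Fin n) (g : Fin n → tower n) : ⟨n, g⟩ ∈ line n i g :=
  ⟨g i, by simp⟩

theorem exists_eq_line_of_mem {n : ℕ} {i : Fin n} {g : Fin n → tower n} {x : Grid}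
    (hx : x ∈ line n i g) : ∃ j : Fin x.1, line n i g = line x.1 j x.2 := by
  obtain ⟨z, rfl⟩ := hx
  exact ⟨i, (line_update n i g z).symm⟩

theorem line_inter_line_subset {n : ℕ} {i j : Fin n} (hij : i ≠ j) (g : Fin n → tower n) :
    line n i g ∩ line n j g ⊆ {⟨n, g⟩} := by
  rintro _ ⟨⟨z, rfl⟩, ⟨w, hw⟩⟩
  have hz : g i = z := by simpa [hij] using congrFun (sigma_mk_injective hw) i
  simp [← hz]

theorem line_injective (n : ℕ) (g : Fin n → tower n) : Injective fun i => line n i g := by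
  intro i j (hij : line n i g = line n j g)
  by_contra hne
  obtain ⟨z, hz⟩ := exists_ne (g i)
  have hmem : (⟨n, update g i z⟩ : Grid) ∈ line n i g ∩ line n j g :=
    ⟨⟨z, rfl⟩, hij ▸ ⟨z, rfl⟩⟩
  have := congrFun (sigma_mk_injective (line_inter_line_subset hne g hmem)) i
  simp [hz] at this

theorem finite_setOf_mem_lines (x : Grid) : {A : lines | x ∈ (A : Set Grid)}.Finite := by
  refine ((Set.finite_range fun j => line x.1 j x.2).preimage
    Subtype.val_injective.injOn).subset ?_
  rintro ⟨_, n, i, g, rfl⟩ hx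
  obtain ⟨j, hj⟩ := exists_eq_line_of_mem hx
  exact ⟨j, hj.symm⟩

theorem lines_inter_subsingleton {A B : Set Grid} (hA : A ∈ lines) (hB : B ∈ lines)
    (hAB : A ≠ B) : (A ∩ B).Subsingleton := by
  obtain ⟨n, i, g, rfl⟩ := hA
  obtain ⟨n', i', g', rfl⟩ := hB
  intro x hx y hy
  obtain ⟨j, hj⟩ := exists_eq_line_of_mem hx.1
  obtain ⟨j', hj'⟩ := exists_eq_line_of_mem hx.2
  rw [hj, hj'] at hAB hx hy
  have hjj' : j ≠ j' := fun h => hAB (h ▸ rfl)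
  exact (line_inter_line_subset hjj' x.2 hx).trans (line_inter_line_subset hjj' x.2 hy).symm

theorem exists_forall_mk_notMem (f : lines → Set Grid) (hf : ∀ A, (f A).Countable) (n : ℕ) :
    ∃ x : Fin n → tower n, ∀ i, (⟨n, x⟩ : Grid) ∉ f ⟨line n i x, line_mem_lines n i x⟩ := by
  let S (i : Fin n) (g : Fin n → tower n) : Set (tower n) :=
    (fun z => ⟨n, update g i z⟩) ⁻¹' f ⟨line n i g, line_mem_lines n i g⟩
  obtain ⟨x, hx⟩ := hasFreePoints_tower n S
    (fun i g => (hf _).preimage (sigma_mk_injective.comp (update_injective g i)))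
    (fun i g z => by simp [S])
  exact ⟨x, fun i => by simpa [S] using hx i⟩

end GridLines

/-- There is a point-finite family `𝒜` of sets with pairwise finite intersections such
that for every assignment of countable sets `A' ⊆ A` (`A ∈ 𝒜`), the family
`{A \ A' : A ∈ 𝒜}` is not point-`< n` for any `n ∈ ω`. -/
theorem exists_pointFinite_family_no_countable_refinement :
    ∃ (X : Type) (𝒜 : Set (Set X)),
      PointLt ℵ₀ (fun A : 𝒜 => (A : Set X)) ∧
      (∀ A ∈ 𝒜, ∀ B ∈ 𝒜, A ≠ B → (A ∩ B).Finite) ∧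
      ∀ f : 𝒜 → Set X, (∀ A : 𝒜, f A ⊆ (A : Set X) ∧ (f A).Countable) →
        ∀ n : ℕ, ¬ PointLt (n : Cardinal) (fun A : 𝒜 => (A : Set X) \ f A) := by
  refine ⟨GridLines.Grid, GridLines.lines,
    pointLt_aleph0_of_finite GridLines.finite_setOf_mem_lines,
    fun A hA B hB hAB => (GridLines.lines_inter_subsingleton hA hB hAB).finite, fun f hf n => ?_⟩
  obtain ⟨x, hx⟩ := GridLines.exists_forall_mk_notMem f (fun A => (hf A).2) n
  exact not_pointLt_of_injective
    (fun i => ⟨GridLines.line n i x, GridLines.line_mem_lines n i x⟩)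
    (fun i j h => GridLines.line_injective n x (congrArg Subtype.val h)) ⟨n, x⟩
    fun i => ⟨GridLines.mk_mem_line n i x, hx i⟩
end

section
/- Let σ be a regular infinite cardinal. There exists a family {A_α : α < σ⁺} of subsets of σ such that |A_α| = σ for every α < σ⁺ and |A_α ∩ A_β| < σ for all α ≠ β, and moreover for every choice of sets A'_α ⊆ A_α with |A'_α| < σ, the family ⟨A_α \ A'_α⟩_{α<σ⁺} is not point-< σ⁺. -/
set_option autoImplicit false

universe u

open Cardinal Set

/-!
Fix a bijection `σ ≃ σ × σ` and take `A_α` to be the copy of the graph of `f_α : σ → σ`, where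
`⟨f_α⟩_{α<σ⁺}` is built by recursion so that distinct `f_α, f_β` agree on fewer than `σ` points:
at stage `α` only `|α| ≤ σ` functions are given, and a diagonal argument along an enumeration of
them in order type `σ` produces a new one. Graphs of such functions are almost disjoint. Finally,
after removing fewer than `σ` points from each `A_α` a point of each remainder can be chosen, and
since `σ⁺` is regular, `σ⁺` of these points coincide.
-/

theorem Set.graphOn_univ_inter_graphOn_univ {α β : Type*} (f g : α → β) :
    Set.univ.graphOn f ∩ Set.univ.graphOn g = {x | f x = g x}.graphOn f := by
  ext ⟨x, y⟩
  simp only [mem_inter_iff, mem_graphOn, mem_univ, true_and, mem_ofPred_eq]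
  constructor
  · rintro ⟨rfl, h⟩
    exact ⟨h.symm, rfl⟩
  · rintro ⟨h, rfl⟩
    exact ⟨rfl, h.symm⟩

theorem Cardinal.mk_graphOn {α β : Type u} (f : α → β) (s : Set α) : #(s.graphOn f) = #s :=
  mk_image_eq fun _ _ h => (Prod.ext_iff.1 h).1

theorem Cardinal.exists_biInter_nonempty_of_mk_lt {ι X : Type u} {S : Set ι} {T : Set X}
    (B : ι → Set X) (hB : ∀ i ∈ S, (B i ∩ T).Nonempty) (hTS : #T < #S) (hS : ℵ₀ ≤ #S) :
    ∃ I ⊆ S, #T < #I ∧ (⋂ i ∈ I, B i).Nonempty := by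
  choose p hp using fun i : S => hB i i.2
  let q (i : S) : T := ⟨p i, (hp i).2⟩
  obtain ⟨t, ht⟩ := infinite_pigeonhole_card_lt q hTS hS
  refine ⟨Subtype.val '' (q ⁻¹' {t}), Subtype.coe_image_subset _ _, ?_, t, ?_⟩
  · rwa [mk_image_eq Subtype.val_injective]
  · simp only [mem_iInter₂]
    rintro _ ⟨i, hi, rfl⟩
    have hpt : p i = t := congrArg Subtype.val hi
    exact hpt ▸ (hp i).1

namespace Cardinal

variable {κ : Cardinal.{u}}

theorem mk_lt_of_forall_lt {o : Ordinal.{u}} (ho : o < κ.ord) {s : Set (Iio κ.ord)}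
    (hs : ∀ x ∈ s, x.1 < o) : #s < lift.{u + 1} κ := by
  calc #s = #(Subtype.val '' s) := (mk_image_eq Subtype.val_injective).symm
    _ ≤ #(Iio o) := mk_le_mk_of_subset <| by rintro _ ⟨x, hx, rfl⟩; exact hs x hx
    _ < lift.{u + 1} κ := by rw [mk_Iio_ordinal, lift_lt]; exact lt_ord.1 ho

theorem exists_forall_mk_setOf_eq_lt (hκ : ℵ₀ ≤ κ) {ι : Type (u + 1)}
    (g : ι → Iio κ.ord → Iio κ.ord) (hι : #ι ≤ lift.{u + 1} κ) :
    ∃ f : Iio κ.ord → Iio κ.ord, ∀ j, #{x | f x = g j x} < lift.{u + 1} κ := by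
  obtain ⟨enum⟩ : Nonempty (ι ↪ Iio κ.ord) := by
    rwa [← le_def, mk_Iio_ordinal, card_ord]
  -- at `x`, avoid the values at `x` of the functions enumerated before `x`
  have hfresh : ∀ x, ∃ y, y ∉ (fun j => g j x) '' (enum ⁻¹' Iio x) := by
    intro x
    by_contra! hall
    have hsmall : #((fun j => g j x) '' (enum ⁻¹' Iio x)) < lift.{u + 1} κ :=
      mk_image_le.trans_lt <| (mk_preimage_of_injective _ _ enum.injective).trans_lt <|
        mk_lt_of_forall_lt x.2 fun _ hy => hy
    rw [eq_univ_of_forall hall, mk_univ, mk_Iio_ordinal, card_ord] at hsmall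
    exact hsmall.false
  choose f hf using hfresh
  refine ⟨f, fun j => mk_lt_of_forall_lt ((isSuccLimit_ord hκ).succ_lt (enum j).2) ?_⟩
  intro x hx
  rw [Order.lt_succ_iff]
  by_contra! hlt
  exact hf x ⟨j, Subtype.coe_lt_coe.1 hlt, hx.symm⟩

theorem exists_pairwise_mk_setOf_eq_lt (hκ : ℵ₀ ≤ κ) :
    ∃ F : Ordinal.{u} → Iio κ.ord → Iio κ.ord, ∀ α < (Order.succ κ).ord,
      ∀ β < (Order.succ κ).ord, α ≠ β → #{x | F α x = F β x} < lift.{u + 1} κ := by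
  have : Nonempty (Iio κ.ord → Iio κ.ord) := ⟨id⟩
  let P (α : Ordinal.{u}) (G : ∀ β < α, Iio κ.ord → Iio κ.ord) (f : Iio κ.ord → Iio κ.ord) :=
    ∀ β (hβ : β < α), #{x | f x = G β hβ x} < lift.{u + 1} κ
  let F := Ordinal.lt_wf.fix fun α G => Classical.epsilon (P α G)
  have hF : ∀ α < (Order.succ κ).ord, ∀ β < α, #{x | F α x = F β x} < lift.{u + 1} κ := by
    intro α hα β hβ
    have hcard : #(Iio α) ≤ lift.{u + 1} κ := by
      rw [mk_Iio_ordinal, lift_le, ← Order.lt_succ_iff]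
      exact lt_ord.1 hα
    obtain ⟨f, hf⟩ := exists_forall_mk_setOf_eq_lt hκ (fun γ : Iio α => F γ) hcard
    have hFα : F α = Classical.epsilon (P α fun γ _ => F γ) := Ordinal.lt_wf.fix_eq _ _
    rw [hFα]
    exact Classical.epsilon_spec (p := P α fun γ _ => F γ) ⟨f, fun γ hγ => hf ⟨γ, hγ⟩⟩ β hβ
  refine ⟨F, fun α hα β hβ hne => ?_⟩
  rcases hne.lt_or_gt with h | h
  · simpa only [eq_comm] using hF β hβ α h
  · exact hF α hα β h

theorem exists_almostDisjoint_family (hκ : ℵ₀ ≤ κ) :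
    ∃ A : Ordinal.{u} → Set Ordinal.{u},
      (∀ α, A α ⊆ Iio κ.ord ∧ #(A α) = lift.{u + 1} κ) ∧
      ∀ α < (Order.succ κ).ord, ∀ β < (Order.succ κ).ord, α ≠ β →
        #↥(A α ∩ A β) < lift.{u + 1} κ := by
  obtain ⟨F, hF⟩ := exists_pairwise_mk_setOf_eq_lt hκ
  obtain ⟨e⟩ : Nonempty (Iio κ.ord ≃ Iio κ.ord × Iio κ.ord) := by
    rw [← Cardinal.eq, mk_prod, lift_id, mk_Iio_ordinal, card_ord,
      mul_eq_self (aleph0_le_lift.2 hκ)]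
  have hcode : ∀ s, #(Subtype.val '' (e ⁻¹' s)) = #s := fun s => by
    rw [mk_image_eq Subtype.val_injective, mk_preimage_equiv]
  refine ⟨fun α => Subtype.val '' (e ⁻¹' Set.univ.graphOn (F α)), fun α => ⟨?_, ?_⟩, ?_⟩
  · exact Subtype.coe_image_subset _ _
  · rw [hcode, mk_graphOn, mk_univ, mk_Iio_ordinal, card_ord]
  · intro α hα β hβ hne
    rw [← image_inter Subtype.val_injective, ← preimage_inter, hcode,
      graphOn_univ_inter_graphOn_univ, mk_graphOn]
    exact hF α hα β hβ hne

end Cardinal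

/-- For every regular infinite cardinal `σ` there is an almost disjoint family
`{A_α : α < σ⁺}` of subsets of `σ` of size `σ` (pairwise intersections of size `< σ`)
such that no removal of fewer than `σ` points from each member yields a point-`< σ⁺`
family. -/
theorem exists_ad_family_not_pointLt_succ (σ : Cardinal.{u}) (hσ : σ.IsRegular) :
    ∃ A : Ordinal.{u} → Set Ordinal.{u},
      (∀ α < (Order.succ σ).ord, A α ⊆ Set.Iio σ.ord ∧
        Cardinal.mk ↥(A α) = Cardinal.lift.{u+1} σ) ∧
      (∀ α < (Order.succ σ).ord, ∀ β < (Order.succ σ).ord, α ≠ β →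
        Cardinal.mk ↥(A α ∩ A β) < Cardinal.lift.{u+1} σ) ∧
      ∀ A' : Ordinal.{u} → Set Ordinal.{u},
        (∀ α < (Order.succ σ).ord, A' α ⊆ A α ∧
          Cardinal.mk ↥(A' α) < Cardinal.lift.{u+1} σ) →
        ∃ I : Set Ordinal.{u}, I ⊆ Set.Iio (Order.succ σ).ord ∧
          Cardinal.mk ↥I = Cardinal.lift.{u+1} (Order.succ σ) ∧
          (⋂ α ∈ I, (A α \ A' α)).Nonempty := by
  obtain ⟨A, hA, hAd⟩ := exists_almostDisjoint_family hσ.aleph0_le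
  refine ⟨A, fun α _ => hA α, hAd, fun A' hA' => ?_⟩
  have hrest : ∀ α ∈ Iio (Order.succ σ).ord, (A α \ A' α ∩ Iio σ.ord).Nonempty := by
    intro α hα
    obtain ⟨x, hx⟩ : (A α \ A' α).Nonempty := sdiff_nonempty.2 fun hsub => by
      have := mk_le_mk_of_subset hsub
      rw [(hA α).2] at this
      exact this.not_gt (hA' α hα).2
    exact ⟨x, hx, (hA α).1 hx.1⟩
  have hlt : #(Iio σ.ord) < #(Iio (Order.succ σ).ord) := by
    rw [mk_Iio_ordinal, mk_Iio_ordinal, card_ord, card_ord, lift_lt]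
    exact Order.lt_succ_of_not_isMax (not_isMax σ)
  have hinf : ℵ₀ ≤ #(Iio (Order.succ σ).ord) := by
    rw [mk_Iio_ordinal, card_ord, aleph0_le_lift]
    exact hσ.aleph0_le.trans (Order.le_succ σ)
  obtain ⟨I, hIS, hI, hne⟩ := exists_biInter_nonempty_of_mk_lt _ hrest hlt hinf
  refine ⟨I, hIS, le_antisymm ?_ ?_, hne⟩
  · simpa [mk_Iio_ordinal] using mk_le_mk_of_subset hIS
  · rw [mk_Iio_ordinal, card_ord] at hI
    rw [lift_succ]
    exact Order.succ_le_of_lt hI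
end

section
/- Let X be a T₁ topological space with a <ω-weakly uniform base ℬ, and let x be a non-isolated point of X such that x lies in the closure of some countable set C ⊆ X \ {x}. Then the set {B ∈ ℬ : x ∈ B} is countable (i.e., ℬ is point-countable at x). -/
set_option autoImplicit false

universe u

open Set Cardinal

/-- `ℬ` is a base for the topology of `X`: a family of open sets such that every open
set containing a point `x` contains a member of `ℬ` containing `x`. -/
def IsBase {X : Type u} [TopologicalSpace X] (ℬ : Set (Set X)) : Prop :=
  (∀ B ∈ ℬ, IsOpen B) ∧
  ∀ (x : X) (U : Set X), IsOpen U → x ∈ U → ∃ B ∈ ℬ, x ∈ B ∧ B ⊆ U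

/-- `ℬ` is an `m`-weakly uniform base for `X`: a base such that for every `A ⊆ X` with
`|A| = m`, only finitely many members of `ℬ` contain `A`. -/
def IsWeaklyUniformBase {X : Type u} [TopologicalSpace X] (m : ℕ) (ℬ : Set (Set X)) :
    Prop :=
  IsBase ℬ ∧ ∀ A : Set X, Cardinal.mk A = m → {B ∈ ℬ | A ⊆ B}.Finite

/-- `ℬ` is a `< ω`-weakly uniform base for `X`: a base such that every infinite `A ⊆ X`
has a finite subset `F` contained in only finitely many members of `ℬ`. -/
def IsLtOmegaWeaklyUniformBase {X : Type u} [TopologicalSpace X] (ℬ : Set (Set X)) :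
    Prop :=
  IsBase ℬ ∧ ∀ A : Set X, A.Infinite → ∃ F ⊆ A, F.Finite ∧ {B ∈ ℬ | F ⊆ B}.Finite

/-- If `ℬ` is a `< ω`-weakly uniform base for a `T₁` space `X` and `x` is a non-isolated
point lying in the closure of a countable set `C ⊆ X \ {x}`, then `ℬ` is point-countable
at `x`. -/
theorem countable_mem_of_ltOmegaWeaklyUniformBase {X : Type u} [TopologicalSpace X]
    [T1Space X] (ℬ : Set (Set X)) (hℬ : IsLtOmegaWeaklyUniformBase ℬ)
    (x : X) (hx : ¬ IsOpen ({x} : Set X))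
    (C : Set X) (hC : C.Countable) (hxC : x ∉ C) (hcl : x ∈ closure C) :
    {B ∈ ℬ | x ∈ B}.Countable := by
  classical
  by_contra hcount
  obtain ⟨⟨hopen, -⟩, hwub⟩ := hℬ
  set S := {B ∈ ℬ | x ∈ B} with hS
  -- Step lemma: any uncountable 𝒱 ⊆ S can be refined by a new point of C
  have step : ∀ (𝒱 : Set (Set X)) (D : Finset X), ¬𝒱.Countable → 𝒱 ⊆ S → ↑D ⊆ C →
      ∃ c, c ∈ C ∧ c ∉ D ∧ ¬{B ∈ 𝒱 | c ∈ B}.Countable := by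
    intro 𝒱 D h𝒱 h𝒱S hDC
    by_contra h
    push_neg at h
    have hne : ∀ B ∈ 𝒱, ∃ c, (c ∈ C ∧ c ∉ D) ∧ c ∈ B := by
      intro B hB
      have hBo : IsOpen (B \ ↑D) := (hopen B (h𝒱S hB).1).sdiff D.finite_toSet.isClosed
      have hxB : x ∈ B \ ↑D := ⟨(h𝒱S hB).2, fun hxD => hxC (hDC hxD)⟩
      obtain ⟨c, hc1, hc2⟩ := mem_closure_iff.mp hcl _ hBo hxB
      exact ⟨c, ⟨hc2, fun hcD => hc1.2 hcD⟩, hc1.1⟩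
    choose f hf hfB using hne
    apply h𝒱
    have hsub : 𝒱 ⊆ ⋃ c ∈ {c ∈ C | c ∉ D}, {B ∈ 𝒱 | c ∈ B} := by
      intro B hB
      exact mem_biUnion ⟨(hf B hB).1, (hf B hB).2⟩ ⟨hB, hfB B hB⟩
    exact Set.Countable.mono hsub
      (Set.Countable.biUnion (hC.mono (sep_subset _ _)) fun c hc => h c hc.1 hc.2)
  -- the type of stages of the construction
  let T := {p : Finset X × Set (Set X) // ↑p.1 ⊆ C ∧ ¬p.2.Countable ∧ p.2 ⊆ S ∧
      ∀ B ∈ p.2, (↑p.1 : Set X) ⊆ B}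
  have succ_ex : ∀ p : T, ∃ q : T,
      p.1.1 ⊆ q.1.1 ∧ q.1.1.card = p.1.1.card + 1 ∧ q.1.2 ⊆ p.1.2 := by
    rintro ⟨⟨D, 𝒱⟩, hDC, h𝒱, h𝒱S, h𝒱D⟩
    obtain ⟨c, hcC, hcD, hc⟩ := step 𝒱 D h𝒱 h𝒱S hDC
    refine ⟨⟨(insert c D, {B ∈ 𝒱 | c ∈ B}), ?_, hc, fun B hB => h𝒱S hB.1, ?_⟩,
      Finset.subset_insert _ _, Finset.card_insert_of_notMem hcD, fun B hB => hB.1⟩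
    · intro y hy
      rcases Finset.mem_insert.mp hy with rfl | h'
      · exact hcC
      · exact hDC h'
    · rintro B ⟨hB𝒱, hcB⟩ y hy
      rcases Finset.mem_insert.mp hy with rfl | h'
      · exact hcB
      · exact h𝒱D B hB𝒱 h'
  choose succ hsubD hcard hsub𝒱 using succ_ex
  let p0 : T := ⟨(∅, S), by simp, hcount, subset_rfl, fun B _ => by simp⟩
  let g : ℕ → T := fun n => succ^[n] p0
  have hgsucc : ∀ n, g (n + 1) = succ (g n) := fun n =>
    Function.iterate_succ_apply' _ _ _
  have hg0 : g 0 = p0 := rfl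
  have hmonoD : Monotone fun n => (g n).1.1 := by
    apply monotone_nat_of_le_succ
    intro n
    rw [hgsucc]
    exact hsubD (g n)
  have hcardn : ∀ n, (g n).1.1.card = n := by
    intro n
    induction n with
    | zero => rw [hg0]; rfl
    | succ n ih => rw [hgsucc, hcard, ih]
  set A := ({x} : Set X) ∪ ⋃ n, ((g n).1.1 : Set X) with hA
  have hAinf : A.Infinite := by
    intro hfin
    have hle : ∀ n : ℕ, n ≤ hfin.toFinset.card := by
      intro n
      have hsubA : ((g n).1.1 : Set X) ⊆ A :=
        subset_union_of_subset_right (subset_iUnion (fun n => ((g n).1.1 : Set X)) n) _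
      have hss : (g n).1.1 ⊆ hfin.toFinset := fun y hy =>
        hfin.mem_toFinset.mpr (hsubA hy)
      calc n = (g n).1.1.card := (hcardn n).symm
        _ ≤ _ := Finset.card_le_card hss
    exact absurd (hle (hfin.toFinset.card + 1)) (by omega)
  obtain ⟨F, hFA, hFfin, hFB⟩ := hwub A hAinf
  -- find N with F ⊆ {x} ∪ D_N
  have hFU : F ⊆ ⋃ n, (({x} : Set X) ∪ ((g n).1.1 : Set X)) := by
    intro y hy
    rcases hFA hy with h' | h'
    · exact mem_iUnion.mpr ⟨0, Or.inl h'⟩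
    · obtain ⟨n, hn⟩ := mem_iUnion.mp h'
      exact mem_iUnion.mpr ⟨n, Or.inr hn⟩
  obtain ⟨I, hIfin, hFI⟩ := Set.finite_subset_iUnion hFfin hFU
  obtain ⟨N, hN⟩ := hIfin.bddAbove
  have hFsub : F ⊆ ({x} : Set X) ∪ ((g N).1.1 : Set X) := by
    intro y hy
    obtain ⟨n, hnI, hyn⟩ := mem_iUnion₂.mp (hFI hy)
    rcases hyn with h' | h'
    · exact Or.inl h'
    · exact Or.inr (hmonoD (hN hnI) h')
  have hsubfin : (g N).1.2 ⊆ {B ∈ ℬ | F ⊆ B} := by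
    intro B hB
    have hBS : B ∈ S := (g N).2.2.2.1 hB
    refine ⟨hBS.1, fun y hy => ?_⟩
    rcases hFsub hy with h' | h'
    · exact mem_singleton_iff.mp h' ▸ hBS.2
    · exact (g N).2.2.2.2 B hB h'
  exact (g N).2.2.1 ((hFB.subset hsubfin).countable)
end
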